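/- Special value product identity from duplication: let [·] be an odd function satisfying the duplication formula [2x] = 2[x] ∏_{s=1}^3 [x - ω_s/2]/[-ω_s/2] and the quasi-periodicity [u+ω_r] = ε_r e(η_r(u + ω_r/2))[u], with ω₀ = 0, ω₃ = -ω₁ - ω₂. Then for each r ∈ {0,1,2,3}: ∏_{0 ≤ s ≤ 3, s ≠ r} [½(ω_r - ω_s)] = ε_r e(½ η_r ω_r) ∏_{s=1}^3 [-½ω_s]. -/
import Mathlib


open Finset

/-- `e(u) = exp(2πiu)`. -/
noncomputable def eFun (z : ℂ) : ℂ := Complex.exp (2 * ↑Real.pi * Complex.I * z)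

lemma eFun_add (a b : ℂ) : eFun (a + b) = eFun a * eFun b := by
  rw [eFun, eFun, eFun, mul_add, Complex.exp_add]

lemma eFun_zero : eFun 0 = 1 := by simp [eFun]

lemma prod3 (g : Fin 4 → ℂ) (a b c : Fin 4) (h1 : a ≠ b) (h2 : a ≠ c) (h3 : b ≠ c) :
    ∏ s ∈ ({a, b, c} : Finset (Fin 4)), g s = g a * (g b * g c) := by
  rw [Finset.prod_insert (by simp [h1, h2]), Finset.prod_insert (by simp [h3]),
    Finset.prod_singleton]

lemma eps_sq (f : ℂ → ℂ) (hodd : ∀ u : ℂ, f (-u) = -f u) (ω ε η : Fin 4 → ℂ)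
    (hqp : ∀ (r : Fin 4) (u : ℂ),
      f (u + ω r) = ε r * eFun (η r * (u + ω r / 2)) * f u)
    (r : Fin 4) (u : ℂ) (hu : f u ≠ 0) : ε r * ε r = 1 := by
  have h1 := hqp r u
  have h2 := hqp r (-(u + ω r))
  rw [show -(u + ω r) + ω r = -u by ring, hodd u, hodd (u + ω r)] at h2
  have hE : eFun (η r * (-(u + ω r) + ω r / 2)) * eFun (η r * (u + ω r / 2)) = 1 := by
    rw [← eFun_add, show η r * (-(u + ω r) + ω r / 2) + η r * (u + ω r / 2) = 0 by ring,
      eFun_zero]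
  have key : (ε r * ε r) * f u = 1 * f u := by
    linear_combination (-(ε r * eFun (η r * (-(u + ω r) + ω r / 2)))) * h1 + h2 +
      (-(ε r * ε r * f u)) * hE
  exact mul_right_cancel₀ hu key

/-- Special value product identity from the duplication formula:
`∏_{s≠r} [½(ω_r-ω_s)] = ε_r e(½ η_r ω_r) ∏_{s=1}^3 [-½ω_s]`. -/
theorem special_value_product (f : ℂ → ℂ)
    (hodd : ∀ u : ℂ, f (-u) = -f u)
    (ω ε η : Fin 4 → ℂ)
    (hω0 : ω 0 = 0) (hω3 : ω 3 = -ω 1 - ω 2)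
    (hdup : ∀ x : ℂ, f (2 * x) =
      2 * f x * ∏ s ∈ ({1, 2, 3} : Finset (Fin 4)), f (x - ω s / 2) / f (-(ω s) / 2))
    (hqp : ∀ (r : Fin 4) (u : ℂ),
      f (u + ω r) = ε r * eFun (η r * (u + ω r / 2)) * f u)
    (r : Fin 4) :
    ∏ s ∈ univ.erase r, f ((ω r - ω s) / 2) =
      ε r * eFun (η r * ω r / 2) * ∏ s ∈ ({1, 2, 3} : Finset (Fin 4)), f (-(ω s) / 2) := by
  fin_cases r
  · -- r = 0
    show ∏ s ∈ univ.erase (0 : Fin 4), f ((ω 0 - ω s) / 2) =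
      ε 0 * eFun (η 0 * ω 0 / 2) * ∏ s ∈ ({1, 2, 3} : Finset (Fin 4)), f (-(ω s) / 2)
    rw [show (univ.erase (0 : Fin 4)) = ({1, 2, 3} : Finset (Fin 4)) by decide,
      prod3 _ _ _ _ (by decide) (by decide) (by decide),
      prod3 _ _ _ _ (by decide) (by decide) (by decide)]
    have key : (ε 0 - 1) * (f (-(ω 1) / 2) * (f (-(ω 2) / 2) * f (-(ω 3) / 2))) = 0 := by
      rcases eq_or_ne (f (-(ω 1) / 2)) 0 with h1 | h1
      · rw [h1]; ring
      rcases eq_or_ne (f (-(ω 2) / 2)) 0 with h2 | h2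
      · rw [h2]; ring
      rcases eq_or_ne (f (-(ω 3) / 2)) 0 with h3 | h3
      · rw [h3]; ring
      have q : ∀ s : Fin 4, f (-(ω s) / 2) ≠ 0 →
          ε 0 * eFun (η 0 * (-(ω s) / 2 + ω 0 / 2)) = 1 := by
        intro s hs
        have h := hqp 0 (-(ω s) / 2)
        rw [show -(ω s) / 2 + ω 0 = -(ω s) / 2 by rw [hω0]; ring] at h
        exact mul_right_cancel₀ hs (by linear_combination -h)
      have q1 := q 1 h1
      have q2 := q 2 h2
      have q3 := q 3 h3
      have hE : eFun (η 0 * (-(ω 1) / 2 + ω 0 / 2)) * eFun (η 0 * (-(ω 2) / 2 + ω 0 / 2)) *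
          eFun (η 0 * (-(ω 3) / 2 + ω 0 / 2)) = 1 := by
        rw [← eFun_add, ← eFun_add,
          show η 0 * (-(ω 1) / 2 + ω 0 / 2) + η 0 * (-(ω 2) / 2 + ω 0 / 2) +
            η 0 * (-(ω 3) / 2 + ω 0 / 2) = 0 by rw [hω0, hω3]; ring, eFun_zero]
      have hcube : ε 0 * ε 0 * ε 0 = 1 := by
        linear_combination (ε 0 * ε 0 * eFun (η 0 * (-(ω 2) / 2 + ω 0 / 2)) *
            eFun (η 0 * (-(ω 3) / 2 + ω 0 / 2))) * q1 +
          (ε 0 * eFun (η 0 * (-(ω 3) / 2 + ω 0 / 2))) * q2 + q3 - (ε 0 * ε 0 * ε 0) * hE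
      have hsq := eps_sq f hodd ω ε η hqp 0 (-(ω 1) / 2) h1
      have : ε 0 = 1 := by linear_combination hcube - ε 0 * hsq
      rw [this]; ring
    have hE0 : eFun (η 0 * ω 0 / 2) = 1 := by
      rw [show η 0 * ω 0 / 2 = 0 by rw [hω0]; ring, eFun_zero]
    rw [hE0, show (ω 0 - ω 1) / 2 = -(ω 1) / 2 by rw [hω0]; ring,
      show (ω 0 - ω 2) / 2 = -(ω 2) / 2 by rw [hω0]; ring,
      show (ω 0 - ω 3) / 2 = -(ω 3) / 2 by rw [hω0]; ring]
    linear_combination -key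
  · -- r = 1
    show ∏ s ∈ univ.erase (1 : Fin 4), f ((ω 1 - ω s) / 2) =
      ε 1 * eFun (η 1 * ω 1 / 2) * ∏ s ∈ ({1, 2, 3} : Finset (Fin 4)), f (-(ω s) / 2)
    rw [show (univ.erase (1 : Fin 4)) = ({0, 2, 3} : Finset (Fin 4)) by decide,
      prod3 _ _ _ _ (by decide) (by decide) (by decide),
      prod3 _ _ _ _ (by decide) (by decide) (by decide)]
    have A : f ((ω 1 - ω 0) / 2) =
        ε 1 * eFun (η 1 * (-(ω 1) / 2 + ω 1 / 2)) * f (-(ω 1) / 2) := by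
      rw [show (ω 1 - ω 0) / 2 = -(ω 1) / 2 + ω 1 by rw [hω0]; ring]; exact hqp 1 _
    have B : f ((ω 1 - ω 2) / 2) =
        ε 1 * eFun (η 1 * (-(ω 1 + ω 2) / 2 + ω 1 / 2)) * f (-(ω 1 + ω 2) / 2) := by
      rw [show (ω 1 - ω 2) / 2 = -(ω 1 + ω 2) / 2 + ω 1 by ring]; exact hqp 1 _
    have B' : f (-(ω 1 + ω 2) / 2) = -f (-(ω 3) / 2) := by
      rw [show -(ω 1 + ω 2) / 2 = -(-(ω 3) / 2) by rw [hω3]; ring]; exact hodd _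
    have C : f ((ω 1 - ω 3) / 2) =
        ε 1 * eFun (η 1 * (-(ω 1 + ω 3) / 2 + ω 1 / 2)) * f (-(ω 1 + ω 3) / 2) := by
      rw [show (ω 1 - ω 3) / 2 = -(ω 1 + ω 3) / 2 + ω 1 by ring]; exact hqp 1 _
    have C' : f (-(ω 1 + ω 3) / 2) = -f (-(ω 2) / 2) := by
      rw [show -(ω 1 + ω 3) / 2 = -(-(ω 2) / 2) by rw [hω3]; ring]; exact hodd _
    have Eprod : eFun (η 1 * (-(ω 1) / 2 + ω 1 / 2)) *
        eFun (η 1 * (-(ω 1 + ω 2) / 2 + ω 1 / 2)) *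
        eFun (η 1 * (-(ω 1 + ω 3) / 2 + ω 1 / 2)) = eFun (η 1 * ω 1 / 2) := by
      rw [← eFun_add, ← eFun_add,
        show η 1 * (-(ω 1) / 2 + ω 1 / 2) + η 1 * (-(ω 1 + ω 2) / 2 + ω 1 / 2) +
          η 1 * (-(ω 1 + ω 3) / 2 + ω 1 / 2) = η 1 * ω 1 / 2 by rw [hω3]; ring]
    have key : (ε 1 * ε 1 - 1) * (f (-(ω 1) / 2) * (f (-(ω 2) / 2) * f (-(ω 3) / 2))) = 0 := by
      rcases eq_or_ne (f (-(ω 1) / 2)) 0 with h | h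
      · rw [h]; ring
      · rw [eps_sq f hodd ω ε η hqp 1 _ h]; ring
    rw [A, B, C, B', C']
    linear_combination (ε 1 * ε 1 * ε 1 * (f (-(ω 1) / 2) * f (-(ω 2) / 2) * f (-(ω 3) / 2))) *
      Eprod + (ε 1 * eFun (η 1 * ω 1 / 2)) * key
  · -- r = 2
    show ∏ s ∈ univ.erase (2 : Fin 4), f ((ω 2 - ω s) / 2) =
      ε 2 * eFun (η 2 * ω 2 / 2) * ∏ s ∈ ({1, 2, 3} : Finset (Fin 4)), f (-(ω s) / 2)
    rw [show (univ.erase (2 : Fin 4)) = ({0, 1, 3} : Finset (Fin 4)) by decide,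
      prod3 _ _ _ _ (by decide) (by decide) (by decide),
      prod3 _ _ _ _ (by decide) (by decide) (by decide)]
    have A : f ((ω 2 - ω 0) / 2) =
        ε 2 * eFun (η 2 * (-(ω 2) / 2 + ω 2 / 2)) * f (-(ω 2) / 2) := by
      rw [show (ω 2 - ω 0) / 2 = -(ω 2) / 2 + ω 2 by rw [hω0]; ring]; exact hqp 2 _
    have B : f ((ω 2 - ω 1) / 2) =
        ε 2 * eFun (η 2 * (-(ω 2 + ω 1) / 2 + ω 2 / 2)) * f (-(ω 2 + ω 1) / 2) := by
      rw [show (ω 2 - ω 1) / 2 = -(ω 2 + ω 1) / 2 + ω 2 by ring]; exact hqp 2 _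
    have B' : f (-(ω 2 + ω 1) / 2) = -f (-(ω 3) / 2) := by
      rw [show -(ω 2 + ω 1) / 2 = -(-(ω 3) / 2) by rw [hω3]; ring]; exact hodd _
    have C : f ((ω 2 - ω 3) / 2) =
        ε 2 * eFun (η 2 * (-(ω 2 + ω 3) / 2 + ω 2 / 2)) * f (-(ω 2 + ω 3) / 2) := by
      rw [show (ω 2 - ω 3) / 2 = -(ω 2 + ω 3) / 2 + ω 2 by ring]; exact hqp 2 _
    have C' : f (-(ω 2 + ω 3) / 2) = -f (-(ω 1) / 2) := by
      rw [show -(ω 2 + ω 3) / 2 = -(-(ω 1) / 2) by rw [hω3]; ring]; exact hodd _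
    have Eprod : eFun (η 2 * (-(ω 2) / 2 + ω 2 / 2)) *
        eFun (η 2 * (-(ω 2 + ω 1) / 2 + ω 2 / 2)) *
        eFun (η 2 * (-(ω 2 + ω 3) / 2 + ω 2 / 2)) = eFun (η 2 * ω 2 / 2) := by
      rw [← eFun_add, ← eFun_add,
        show η 2 * (-(ω 2) / 2 + ω 2 / 2) + η 2 * (-(ω 2 + ω 1) / 2 + ω 2 / 2) +
          η 2 * (-(ω 2 + ω 3) / 2 + ω 2 / 2) = η 2 * ω 2 / 2 by rw [hω3]; ring]
    have key : (ε 2 * ε 2 - 1) * (f (-(ω 1) / 2) * (f (-(ω 2) / 2) * f (-(ω 3) / 2))) = 0 := by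
      rcases eq_or_ne (f (-(ω 1) / 2)) 0 with h | h
      · rw [h]; ring
      · rw [eps_sq f hodd ω ε η hqp 2 _ h]; ring
    rw [A, B, C, B', C']
    linear_combination (ε 2 * ε 2 * ε 2 * (f (-(ω 1) / 2) * f (-(ω 2) / 2) * f (-(ω 3) / 2))) *
      Eprod + (ε 2 * eFun (η 2 * ω 2 / 2)) * key
  · -- r = 3
    show ∏ s ∈ univ.erase (3 : Fin 4), f ((ω 3 - ω s) / 2) =
      ε 3 * eFun (η 3 * ω 3 / 2) * ∏ s ∈ ({1, 2, 3} : Finset (Fin 4)), f (-(ω s) / 2)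
    rw [show (univ.erase (3 : Fin 4)) = ({0, 1, 2} : Finset (Fin 4)) by decide,
      prod3 _ _ _ _ (by decide) (by decide) (by decide),
      prod3 _ _ _ _ (by decide) (by decide) (by decide)]
    have A : f ((ω 3 - ω 0) / 2) =
        ε 3 * eFun (η 3 * (-(ω 3) / 2 + ω 3 / 2)) * f (-(ω 3) / 2) := by
      rw [show (ω 3 - ω 0) / 2 = -(ω 3) / 2 + ω 3 by rw [hω0]; ring]; exact hqp 3 _
    have B : f ((ω 3 - ω 1) / 2) =
        ε 3 * eFun (η 3 * (-(ω 3 + ω 1) / 2 + ω 3 / 2)) * f (-(ω 3 + ω 1) / 2) := by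
      rw [show (ω 3 - ω 1) / 2 = -(ω 3 + ω 1) / 2 + ω 3 by ring]; exact hqp 3 _
    have B' : f (-(ω 3 + ω 1) / 2) = -f (-(ω 2) / 2) := by
      rw [show -(ω 3 + ω 1) / 2 = -(-(ω 2) / 2) by rw [hω3]; ring]; exact hodd _
    have C : f ((ω 3 - ω 2) / 2) =
        ε 3 * eFun (η 3 * (-(ω 3 + ω 2) / 2 + ω 3 / 2)) * f (-(ω 3 + ω 2) / 2) := by
      rw [show (ω 3 - ω 2) / 2 = -(ω 3 + ω 2) / 2 + ω 3 by ring]; exact hqp 3 _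
    have C' : f (-(ω 3 + ω 2) / 2) = -f (-(ω 1) / 2) := by
      rw [show -(ω 3 + ω 2) / 2 = -(-(ω 1) / 2) by rw [hω3]; ring]; exact hodd _
    have Eprod : eFun (η 3 * (-(ω 3) / 2 + ω 3 / 2)) *
        eFun (η 3 * (-(ω 3 + ω 1) / 2 + ω 3 / 2)) *
        eFun (η 3 * (-(ω 3 + ω 2) / 2 + ω 3 / 2)) = eFun (η 3 * ω 3 / 2) := by
      rw [← eFun_add, ← eFun_add,
        show η 3 * (-(ω 3) / 2 + ω 3 / 2) + η 3 * (-(ω 3 + ω 1) / 2 + ω 3 / 2) +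
          η 3 * (-(ω 3 + ω 2) / 2 + ω 3 / 2) = η 3 * ω 3 / 2 by rw [hω3]; ring]
    have key : (ε 3 * ε 3 - 1) * (f (-(ω 1) / 2) * (f (-(ω 2) / 2) * f (-(ω 3) / 2))) = 0 := by
      rcases eq_or_ne (f (-(ω 1) / 2)) 0 with h | h
      · rw [h]; ring
      · rw [eps_sq f hodd ω ε η hqp 3 _ h]; ring
    rw [A, B, C, B', C']
    linear_combination (ε 3 * ε 3 * ε 3 * (f (-(ω 1) / 2) * f (-(ω 2) / 2) * f (-(ω 3) / 2))) *
      Eprod + (ε 3 * eFun (η 3 * ω 3 / 2)) * key
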